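/- arXiv:1504.04820 — 2 statements merged into one kernel-verified Lean document; each statement's English description precedes it below -/
import Mathlib

section
/- If every boundary vertex of a connected graph G is simplicial (i.e., ∂(G)=σ(G)), then the strong resolving graph of G is a complete graph on the vertex set ∂(G) together with isolated vertices elsewhere; in particular, for any tree T with l leaves, the strong resolving graph of T restricted to its non-isolated vertices is the complete graph K_l on the leaves. -/
open SimpleGraph

variable {V : Type*}

/-- `w` strongly resolves `u` and `v` in `G`. -/
def StronglyResolves (G : SimpleGraph V) (w u v : V) : Prop :=
  G.dist u w = G.dist u v + G.dist v w ∨ G.dist v w = G.dist v u + G.dist u w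

/-- `S` is a strong metric generator for `G`. -/
def IsStrongMetricGen (G : SimpleGraph V) (S : Set V) : Prop :=
  ∀ u v : V, u ≠ v → ∃ w ∈ S, StronglyResolves G w u v

/-- The simultaneous strong metric dimension of a family of graphs. -/
noncomputable def SdS (𝒢 : Set (SimpleGraph V)) : ℕ :=
  sInf {n | ∃ S : Set V, S.ncard = n ∧ ∀ G ∈ 𝒢, IsStrongMetricGen G S}

/-- The strong metric dimension of a single graph. -/
noncomputable def sdim (G : SimpleGraph V) : ℕ := SdS {G}

/-- `u` is maximally distant from `v` in `G`. -/
def MaxDistantFrom (G : SimpleGraph V) (u v : V) : Prop :=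
  ∀ w : V, G.Adj u w → G.dist v w ≤ G.dist v u

/-- `u` and `v` are mutually maximally distant in `G`. -/
def MutuallyMaxDistant (G : SimpleGraph V) (u v : V) : Prop :=
  MaxDistantFrom G u v ∧ MaxDistantFrom G v u

/-- The strong resolving graph of `G`. -/
def SRG (G : SimpleGraph V) : SimpleGraph V where
  Adj u v := u ≠ v ∧ MutuallyMaxDistant G u v
  symm := by
    refine ⟨fun u v h => ?_⟩
    exact ⟨h.1.symm, h.2.2, h.2.1⟩
  loopless := by refine ⟨fun u h => ?_⟩; exact h.1 rfl

/-- The boundary of `G`: vertices mutually maximally distant from some vertex. -/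
def Boundary (G : SimpleGraph V) : Set V :=
  {u | ∃ v, MutuallyMaxDistant G u v}

/-- `S` is a vertex cover of `G`. -/
def IsVertexCover (G : SimpleGraph V) (S : Set V) : Prop :=
  ∀ u v : V, G.Adj u v → u ∈ S ∨ v ∈ S

/-- The vertex cover number. -/
noncomputable def vcNum (G : SimpleGraph V) : ℕ :=
  sInf {n | ∃ S : Set V, S.ncard = n ∧ _root_.IsVertexCover G S}

/-- A strong resolving cover: simultaneously a vertex cover and a strong metric generator. -/
def IsStrongResCover (G : SimpleGraph V) (S : Set V) : Prop :=
  _root_.IsVertexCover G S ∧ IsStrongMetricGen G S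

/-- The strong resolving cover number `β_s`. -/
noncomputable def betaS (G : SimpleGraph V) : ℕ :=
  sInf {n | ∃ S : Set V, S.ncard = n ∧ IsStrongResCover G S}

/-- `G` is 2-antipodal. -/
def TwoAntipodal (G : SimpleGraph V) : Prop :=
  ∀ x : V, ∃! y : V, G.dist x y = G.diam

/-- `v` is a leaf of `G` (degree one). -/
def IsLeaf (G : SimpleGraph V) (v : V) : Prop := ∃! w : V, G.Adj v w
/-- `v` is a simplicial vertex of `G`. -/
def IsSimplicial (G : SimpleGraph V) (v : V) : Prop :=
  ∀ x ∈ G.neighborSet v, ∀ y ∈ G.neighborSet v, x ≠ y → G.Adj x y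

/-!
If `v` is simplicial and `u ≠ v`, let `x` be the neighbour of `v` on a shortest `u`-`v` path; every
other neighbour of `v` is adjacent to `x`, hence no farther from `u` than `v` is. So simplicial
vertices are mutually maximally distant, and leaves are simplicial. Conversely, in a tree the
distances to `u` of adjacent vertices differ by exactly one, so a vertex maximally distant from `u`
has all its neighbours closer to `u`, and uniqueness of paths allows only one such neighbour.
-/

namespace SimpleGraph

variable {G : SimpleGraph V} {u v : V}

lemma Reachable.exists_adj_dist_add_one_eq (h : G.Reachable u v) (hne : u ≠ v) :
    ∃ x, G.Adj v x ∧ G.dist u x + 1 = G.dist u v := by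
  obtain ⟨p, hp⟩ := h.symm.exists_walk_length_eq_dist
  cases p with
  | nil => exact absurd rfl hne
  | cons hadj q =>
    refine ⟨_, hadj, ?_⟩
    have hq := length_eq_dist_of_subwalk hp (Walk.isSubwalk_cons q hadj)
    rw [Walk.length_cons, hq] at hp
    rw [dist_comm, hp, dist_comm]

lemma IsAcyclic.eq_of_adj_of_dist_add_one_eq (hG : G.IsAcyclic) {w₁ w₂ : V}
    (h₁ : G.Adj w₁ u) (h₂ : G.Adj w₂ u)
    (d₁ : G.dist v w₁ + 1 = G.dist v u) (d₂ : G.dist v w₂ + 1 = G.dist v u) : w₁ = w₂ := by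
  have extend : ∀ {w} (h : G.Adj w u), G.dist v w + 1 = G.dist v u →
      ∃ p : G.Walk v w, (p.concat h).IsPath := by
    classical
    intro w h d
    have hvw : G.Reachable v w := (Reachable.of_dist_ne_zero (by omega)).trans h.symm.reachable
    obtain ⟨p, hp, hlen⟩ := hvw.exists_path_of_dist
    refine ⟨p, hp.concat (fun hu => ?_) h⟩
    have := (dist_le (p.takeUntil u hu)).trans (p.length_takeUntil_le_length hu)
    omega
  -- both closer neighbours extend shortest paths to a `v`-`u` path, which is unique in a forest
  obtain ⟨p₁, hp₁⟩ := extend h₁ d₁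
  obtain ⟨p₂, hp₂⟩ := extend h₂ d₂
  exact (Walk.concat_inj (Subtype.mk.inj ((hG.subsingleton_path v u).elim ⟨_, hp₁⟩ ⟨_, hp₂⟩))).1

end SimpleGraph

lemma MutuallyMaxDistant.symm {G : SimpleGraph V} {u v : V} (h : MutuallyMaxDistant G u v) :
    MutuallyMaxDistant G v u :=
  ⟨h.2, h.1⟩

lemma IsLeaf.isSimplicial {G : SimpleGraph V} {v : V} (h : IsLeaf G v) : IsSimplicial G v := by
  obtain ⟨w, -, hw⟩ := h
  intro x hx y hy hxy
  exact absurd ((hw x hx).trans (hw y hy).symm) hxy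

lemma IsSimplicial.maxDistantFrom {G : SimpleGraph V} {u v : V} (hs : IsSimplicial G v)
    (h : G.Reachable u v) (hne : u ≠ v) : MaxDistantFrom G v u := by
  obtain ⟨x, hvx, hx⟩ := h.exists_adj_dist_add_one_eq hne
  intro w hvw
  rcases eq_or_ne x w with rfl | hxw
  · omega
  · have := (h.trans hvx.reachable).dist_triangle_left w
    rw [dist_eq_one_iff_adj.mpr (hs x hvx w hvw hxw)] at this
    omega

lemma srg_adj_of_isSimplicial {G : SimpleGraph V} {u v : V} (hu : IsSimplicial G u)
    (hv : IsSimplicial G v) (h : G.Reachable u v) (hne : u ≠ v) : (SRG G).Adj u v :=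
  ⟨hne, hu.maxDistantFrom h.symm hne.symm, hv.maxDistantFrom h hne⟩

lemma SimpleGraph.IsAcyclic.isLeaf_of_maxDistantFrom {G : SimpleGraph V} {u v : V}
    (hG : G.IsAcyclic) (h : G.Reachable v u) (hne : u ≠ v) (hmax : MaxDistantFrom G u v) :
    IsLeaf G u := by
  obtain ⟨x, hux, hx⟩ := h.exists_adj_dist_add_one_eq hne.symm
  refine ⟨x, hux, fun w huw => hG.eq_of_adj_of_dist_add_one_eq huw.symm hux.symm ?_ hx⟩
  have := hmax w huw
  have := hG.dist_eq_dist_add_one_of_adj_of_reachable v huw h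
  omega

theorem stmt3_general :
    (∀ G : SimpleGraph V, G.Connected → Boundary G = {v : V | IsSimplicial G v} →
      ∀ u v : V, (SRG G).Adj u v ↔ u ≠ v ∧ u ∈ Boundary G ∧ v ∈ Boundary G) ∧
    (∀ T : SimpleGraph V, T.IsTree →
      ∀ u v : V, (SRG T).Adj u v ↔ u ≠ v ∧ IsLeaf T u ∧ IsLeaf T v) := by
  refine ⟨fun G hG hbd u v => ⟨?_, ?_⟩, fun T hT u v => ⟨?_, ?_⟩⟩
  · rintro ⟨hne, huv⟩
    exact ⟨hne, ⟨v, huv⟩, ⟨u, huv.symm⟩⟩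
  · rintro ⟨hne, hu, hv⟩
    rw [hbd] at hu hv
    exact srg_adj_of_isSimplicial hu hv (hG u v) hne
  · rintro ⟨hne, huv⟩
    exact ⟨hne, hT.isAcyclic.isLeaf_of_maxDistantFrom (hT.connected v u) hne huv.1,
      hT.isAcyclic.isLeaf_of_maxDistantFrom (hT.connected u v) hne.symm huv.2⟩
  · rintro ⟨hne, hu, hv⟩
    exact srg_adj_of_isSimplicial hu.isSimplicial hv.isSimplicial (hT.connected u v) hne

theorem stmt3 [Fintype V] :
    (∀ G : SimpleGraph V, G.Connected → Boundary G = {v : V | IsSimplicial G v} →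
      ∀ u v : V, (SRG G).Adj u v ↔ u ≠ v ∧ u ∈ Boundary G ∧ v ∈ Boundary G) ∧
    (∀ T : SimpleGraph V, T.IsTree →
      ∀ u v : V, (SRG T).Adj u v ↔ u ≠ v ∧ IsLeaf T u ∧ IsLeaf T v) :=
  stmt3_general
end

section
/- For an odd cycle C_{2k+1}, the strong resolving graph of C_{2k+1} is isomorphic to C_{2k+1} itself. -/
/-!
In `C_{2k+1}` the distance between `u` and `v` is `min t (2k+1-t)` with `t = v - u`, so all
distances are at most `k`, and a vertex at distance less than `k` from `v` has a neighbour farther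
from `v`. Hence `u` and `v` are mutually maximally distant exactly when their distance is `k`, i.e.
the strong resolving graph is the circulant graph on `ℤ/(2k+1)` with jump `k`. Since
`(-2) * k = 1` there, multiplication by `-2` is an additive automorphism carrying the jump `k` to
the jump `1`, which gives the cycle back.
-/

open SimpleGraph

variable {V : Type*}

open Fin.CommRing

theorem Fin.val_sub_eq_ite {n : ℕ} [NeZero n] (u v : Fin n) :
    (u - v).val = if v - u = 0 then 0 else n - (v - u).val := by
  rw [← neg_sub, Fin.val_neg]

namespace SimpleGraph

def Iso.circulantGraph {G H : Type*} [AddGroup G] [AddGroup H] (φ : G ≃+ H) (s : Set G) :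
    circulantGraph s ≃g circulantGraph (φ '' s) where
  toEquiv := φ.toEquiv
  map_rel_iff' := by
    simp [circulantGraph_adj, ← map_sub, φ.injective.mem_set_image]

variable {n : ℕ}

theorem cycleGraph_adj_add_one (hn : n ≠ 0) (u : Fin (n + 1)) :
    (cycleGraph (n + 1)).Adj u (u + 1) := by
  obtain ⟨m, rfl⟩ := Nat.exists_eq_succ_of_ne_zero hn
  exact (cycleGraph_adj (u := u)).mpr (Or.inr (add_sub_cancel_left u 1))

theorem cycleGraph_adj_sub_one (hn : n ≠ 0) (u : Fin (n + 1)) :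
    (cycleGraph (n + 1)).Adj u (u - 1) := by
  simpa using (cycleGraph_adj_add_one hn (u - 1)).symm

theorem exists_cycleGraph_walk_length_eq (hn : n ≠ 0) (u : Fin (n + 1)) (m : ℕ) :
    ∃ p : (cycleGraph (n + 1)).Walk u (u + m), p.length = m := by
  induction m with
  | zero => exact ⟨Walk.nil.copy rfl (by simp), by simp⟩
  | succ m ih =>
    obtain ⟨p, hp⟩ := ih
    refine ⟨(p.concat (cycleGraph_adj_add_one hn _)).copy rfl (by push_cast; ring), ?_⟩
    simp [hp]

theorem cycleGraph_dist_le_val_sub (u v : Fin (n + 1)) :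
    (cycleGraph (n + 1)).dist u v ≤ (v - u).val := by
  rcases eq_or_ne n 0 with rfl | hn
  · simp [Subsingleton.elim (α := Fin 1) u v]
  obtain ⟨p, hp⟩ := exists_cycleGraph_walk_length_eq hn u (v - u).val
  have hv : u + ((v - u).val : Fin (n + 1)) = v := by rw [Fin.cast_val_eq_self, add_sub_cancel]
  simpa [hp] using dist_le (p.copy rfl hv)

theorem Walk.exists_cycleGraph_sub_eq {u v : Fin (n + 1)} (p : (cycleGraph (n + 1)).Walk u v) :
    ∃ a b : ℕ, a + b = p.length ∧ v - u = a - b := by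
  induction p with
  | nil => exact ⟨0, 0, rfl, by simp⟩
  | @cons u w v h p ih =>
    obtain ⟨a, b, hab, hv⟩ := ih
    have val_one {x : Fin (n + 1)} (hx : x.val = 1) : x = 1 := by
      rw [← Fin.cast_val_eq_self x, hx, Nat.cast_one]
    rcases cycleGraph_adj'.mp h with h | h
    · refine ⟨a, b + 1, by simp; omega, ?_⟩
      push_cast
      linear_combination hv - val_one h
    · refine ⟨a + 1, b, by simp; omega, ?_⟩
      push_cast
      linear_combination hv + val_one h

theorem cycleGraph_dist (u v : Fin (n + 1)) :
    (cycleGraph (n + 1)).dist u v = min (v - u).val (n + 1 - (v - u).val) := by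
  have hswap := Fin.val_sub_eq_ite u v
  have hzero : v - u = 0 ↔ (v - u).val = 0 := Fin.ext_iff
  have val_natCast_le (x : ℕ) : (x : Fin (n + 1)).val ≤ x := by
    simpa [Fin.val_natCast] using Nat.mod_le x (n + 1)
  have hle := cycleGraph_dist_le_val_sub u v
  have hle' := dist_comm ▸ cycleGraph_dist_le_val_sub v u
  obtain ⟨p, hp⟩ := (cycleGraph_preconnected u v).exists_walk_length_eq_dist
  obtain ⟨a, b, hab, hvu⟩ := p.exists_cycleGraph_sub_eq
  have hge : (v - u).val ≤ a - b ∨ (u - v).val ≤ b - a := by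
    rcases le_total b a with hba | hab
    · left
      rw [hvu, ← Nat.cast_sub hba]
      exact val_natCast_le _
    · right
      rw [← neg_sub, hvu, neg_sub, ← Nat.cast_sub hab]
      exact val_natCast_le _
  split_ifs at hswap <;> omega

variable {k : ℕ}

theorem cycleGraph_dist_le (u v : Fin (2 * k + 1)) : (cycleGraph (2 * k + 1)).dist u v ≤ k := by
  rw [cycleGraph_dist]
  omega

theorem cycleGraph_dist_eq_iff (u v : Fin (2 * k + 1)) :
    (cycleGraph (2 * k + 1)).dist u v = k ↔ u - v = k ∨ v - u = k := by
  have hk : (k : Fin (2 * k + 1)).val = k := Fin.val_cast_of_lt (by omega)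
  have hswap := Fin.val_sub_eq_ite u v
  have hzero : v - u = 0 ↔ (v - u).val = 0 := Fin.ext_iff
  rw [cycleGraph_dist, Fin.ext_iff, Fin.ext_iff, hk]
  split_ifs at hswap <;> omega

theorem maxDistantFrom_cycleGraph_iff (u v : Fin (2 * k + 1)) :
    MaxDistantFrom (cycleGraph (2 * k + 1)) u v ↔ (cycleGraph (2 * k + 1)).dist v u = k := by
  refine ⟨fun hmax => ?_, fun h w _ => (cycleGraph_dist_le v w).trans h.ge⟩
  by_contra hne
  have hlt := lt_of_le_of_ne (cycleGraph_dist_le v u) hne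
  rw [cycleGraph_dist] at hlt
  rcases lt_or_ge (u - v).val k with htk | htk
  · have hw := hmax _ (cycleGraph_adj_add_one (by omega) u)
    have hval : (u + 1 - v).val = (u - v).val + 1 := by
      rw [add_sub_right_comm, Fin.val_add_one_of_lt (by rw [Fin.lt_def, Fin.val_last]; omega)]
    rw [cycleGraph_dist, cycleGraph_dist, hval] at hw
    omega
  · have hw := hmax _ (cycleGraph_adj_sub_one (by omega) u)
    have hne : u - v ≠ 0 := fun h => by simp only [h, Fin.val_zero] at htk; omega
    have hval : (u - 1 - v).val = (u - v).val - 1 := by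
      rw [sub_right_comm, Fin.val_sub_one_of_ne_zero hne]
    rw [cycleGraph_dist, cycleGraph_dist, hval] at hw
    omega

theorem mutuallyMaxDistant_cycleGraph_iff (u v : Fin (2 * k + 1)) :
    MutuallyMaxDistant (cycleGraph (2 * k + 1)) u v ↔ (cycleGraph (2 * k + 1)).dist u v = k := by
  rw [MutuallyMaxDistant, maxDistantFrom_cycleGraph_iff, maxDistantFrom_cycleGraph_iff, dist_comm,
    and_self]

theorem srg_cycleGraph_eq_circulantGraph :
    SRG (cycleGraph (2 * k + 1)) = circulantGraph {(k : Fin (2 * k + 1))} := by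
  ext u v
  simp only [SRG, mutuallyMaxDistant_cycleGraph_iff, cycleGraph_dist_eq_iff, circulantGraph_adj,
    Set.mem_singleton_iff]

end SimpleGraph

theorem stmt5_general (k : ℕ) :
    Nonempty (SRG (cycleGraph (2 * k + 1)) ≃g cycleGraph (2 * k + 1)) := by
  have hinv : (-2 : Fin (2 * k + 1)) * k = 1 := by
    have h := Fin.natCast_self (2 * k + 1)
    push_cast at h
    linear_combination -h
  let φ := DistribMulAction.toAddEquiv (Fin (2 * k + 1)) (Units.mkOfMulEqOne _ _ hinv)
  have himage : φ '' {(k : Fin (2 * k + 1))} = {1} := by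
    simp only [φ, Set.image_singleton, DistribMulAction.toAddEquiv_apply, Units.smul_def,
      Units.val_mkOfMulEqOne, smul_eq_mul, hinv]
  rw [srg_cycleGraph_eq_circulantGraph, cycleGraph_eq_circulantGraph, ← himage]
  exact ⟨Iso.circulantGraph φ _⟩

theorem stmt5 (k : ℕ) (hk : 1 ≤ k) :
    Nonempty (SRG (cycleGraph (2 * k + 1)) ≃g cycleGraph (2 * k + 1)) :=
  stmt5_general k
end
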